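/- Let ν > 1 and 1/ν + 1/ν² < F < 2, and set H_R := 1/ν², H_s := (F ν²/(ν+1))^{2/3} H_R, H_* := (−ν−1+√(8F²ν⁴+ν²+2ν+1)) H_R/(2(ν+1)). Then H_R < H_s < H_* < 1. -/

import Mathlib

open Real

/-
With `a := F ν² / (ν + 1)` one has `8 F² ν⁴ + (ν + 1)² = (ν + 1)² (1 + 8 a²)`, so `H_* / H_R` is
Bélanger's conjugate-depth ratio `(√(1 + 8 a²) - 1) / 2` of a hydraulic jump with upstream
Froude-type parameter `a`, while `H_s / H_R = a^{2/3}`. The lower bound on `F` says `a > 1`; with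
`t := a^{2/3}` the middle inequality becomes `2 t + 1 < √(1 + 8 t³)`, i.e. `4 t (2 t + 1) (t - 1) > 0`.
The upper bound `H_* < 1` reduces to `2 a² < ν² (ν² + 1)`, which follows from `F < 2` and
`8 ν² ≤ (ν² + 1) (ν + 1)²`.
-/

noncomputable def conjugateDepthRatio (a : ℝ) : ℝ := (√(1 + 8 * a ^ 2) - 1) / 2

lemma two_mul_add_one_lt_sqrt_one_add_eight_mul_pow_three {t : ℝ} (ht : 1 < t) :
    2 * t + 1 < √(1 + 8 * t ^ 3) := by
  have hpos : 0 < 4 * t * (2 * t + 1) * (t - 1) := by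
    have : 0 < t := by linarith
    have : 0 < t - 1 := by linarith
    positivity
  rw [lt_sqrt (by linarith)]
  nlinarith

lemma rpow_two_thirds_lt_conjugateDepthRatio {a : ℝ} (ha : 1 < a) :
    a ^ ((2 : ℝ) / 3) < conjugateDepthRatio a := by
  have ht : 1 < a ^ ((2 : ℝ) / 3) := one_lt_rpow ha (by norm_num)
  have hcube : (a ^ ((2 : ℝ) / 3)) ^ 3 = a ^ 2 := by
    rw [← rpow_natCast, ← rpow_mul (by linarith)]
    norm_num
  have := two_mul_add_one_lt_sqrt_one_add_eight_mul_pow_three ht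
  rw [hcube] at this
  unfold conjugateDepthRatio
  linarith

lemma conjugateDepthRatio_lt_of_two_mul_sq_lt {a b : ℝ} (hb : 0 ≤ b) (h : 2 * a ^ 2 < b * (b + 1)) :
    conjugateDepthRatio a < b := by
  have : √(1 + 8 * a ^ 2) < 2 * b + 1 := by
    rw [sqrt_lt' (by linarith)]
    nlinarith
  unfold conjugateDepthRatio
  linarith

lemma eight_mul_sq_le_mul_sq_add_one_mul_add_one_sq {ν : ℝ} (hν : 0 ≤ ν) :
    8 * ν ^ 2 ≤ (ν ^ 2 + 1) * (ν + 1) ^ 2 := by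
  have h1 : 2 * ν ≤ ν ^ 2 + 1 := by nlinarith [sq_nonneg (ν - 1)]
  have h2 : 4 * ν ≤ (ν + 1) ^ 2 := by nlinarith [sq_nonneg (ν - 1)]
  calc 8 * ν ^ 2 = (2 * ν) * (4 * ν) := by ring
    _ ≤ (ν ^ 2 + 1) * (ν + 1) ^ 2 := mul_le_mul h1 h2 (by positivity) (by positivity)

lemma two_mul_sq_lt_of_lt_two {F ν : ℝ} (hν : 0 < ν) (hF0 : 0 ≤ F) (hF : F < 2) :
    2 * (F * ν ^ 2 / (ν + 1)) ^ 2 < ν ^ 2 * (ν ^ 2 + 1) := by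
  have hν1 : 0 < ν + 1 := by linarith
  rw [div_pow, mul_div_assoc', div_lt_iff₀ (by positivity)]
  have hF2 : F ^ 2 < 4 := by nlinarith
  calc 2 * (F * ν ^ 2) ^ 2 = ν ^ 2 * (2 * F ^ 2 * ν ^ 2) := by ring
    _ < ν ^ 2 * (8 * ν ^ 2) := by gcongr; nlinarith
    _ ≤ ν ^ 2 * ((ν ^ 2 + 1) * (ν + 1) ^ 2) :=
      mul_le_mul_of_nonneg_left (eight_mul_sq_le_mul_sq_add_one_mul_add_one_sq hν.le) (by positivity)
    _ = ν ^ 2 * (ν ^ 2 + 1) * (ν + 1) ^ 2 := by ring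

lemma one_lt_mul_sq_div_add_one {F ν : ℝ} (hν : 0 < ν) (hF : 1 / ν + 1 / ν ^ 2 < F) :
    1 < F * ν ^ 2 / (ν + 1) := by
  rw [one_lt_div (by linarith)]
  have := mul_lt_mul_of_pos_right hF (by positivity : 0 < ν ^ 2)
  field_simp at this
  linarith

lemma sub_add_sqrt_mul_div_eq_conjugateDepthRatio {F ν : ℝ} (hν : 0 < ν + 1) (h : ℝ) :
    (-ν - 1 + √(8 * F ^ 2 * ν ^ 4 + ν ^ 2 + 2 * ν + 1)) * h / (2 * (ν + 1)) =
      conjugateDepthRatio (F * ν ^ 2 / (ν + 1)) * h := by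
  have hsqrt : √(8 * F ^ 2 * ν ^ 4 + ν ^ 2 + 2 * ν + 1) =
      (ν + 1) * √(1 + 8 * (F * ν ^ 2 / (ν + 1)) ^ 2) := by
    have hsq : 8 * F ^ 2 * ν ^ 4 + ν ^ 2 + 2 * ν + 1 =
        (ν + 1) ^ 2 * (1 + 8 * (F * ν ^ 2 / (ν + 1)) ^ 2) := by
      field_simp
      ring
    rw [hsq, sqrt_mul (sq_nonneg _), sqrt_sq hν.le]
  rw [hsqrt, conjugateDepthRatio]
  field_simp
  ring

theorem HR_lt_Hs_lt_Hstar_lt_one (F nu : ℝ) (hnu : 1 < nu)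
    (hFlow : 1 / nu + 1 / nu ^ 2 < F) (hF2 : F < 2) :
    let HR := 1 / nu ^ 2
    let Hs := (F * nu ^ 2 / (nu + 1)) ^ ((2 : ℝ) / 3) * HR
    let Hstar := (-nu - 1 + Real.sqrt (8 * F ^ 2 * nu ^ 4 + nu ^ 2 + 2 * nu + 1)) * HR /
      (2 * (nu + 1))
    HR < Hs ∧ Hs < Hstar ∧ Hstar < 1 := by
  intro HR Hs Hstar
  have hnu0 : 0 < nu := by linarith
  have hHR : 0 < HR := by positivity
  have ha := one_lt_mul_sq_div_add_one hnu0 hFlow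
  have hHstar : Hstar = conjugateDepthRatio (F * nu ^ 2 / (nu + 1)) * HR :=
    sub_add_sqrt_mul_div_eq_conjugateDepthRatio (by linarith) HR
  refine ⟨?_, ?_, ?_⟩
  · exact lt_mul_left hHR (one_lt_rpow ha (by norm_num))
  · rw [hHstar]
    exact mul_lt_mul_of_pos_right (rpow_two_thirds_lt_conjugateDepthRatio ha) hHR
  · have hF0 : 0 ≤ F := by linarith [(by positivity : 0 < 1 / nu + 1 / nu ^ 2)]
    have hratio : conjugateDepthRatio (F * nu ^ 2 / (nu + 1)) < nu ^ 2 :=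
      conjugateDepthRatio_lt_of_two_mul_sq_lt (by positivity)
        (two_mul_sq_lt_of_lt_two hnu0 hF0 hF2)
    rw [hHstar, mul_one_div, div_lt_one (by positivity)]
    exact hratio
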